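/- arXiv:1803.00434 — 8 statements merged into one kernel-verified Lean document; each statement's English description precedes it below -/
import Mathlib

section
/- Let G be a transitive subgroup of the symmetric group S_n that contains a transposition. If G contains a p-cycle for some prime p with p > n/2, then G = S_n. -/
/-!
A cycle `σ` of prime length `p > n/2` makes a transitive group `G` primitive. A block `B` with
at least two points has at most `n/2 < p` translates, while its orbit under the `p`-group
`⟨σ⟩` has `p`-power size; so `σ` fixes `B`. Taking `B` to meet the support of `σ`, it contains
the whole support, hence more than `n/2` points, so `B` is everything. A primitive group
containing a transposition is the full symmetric group (Jordan).
-/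

open Equiv MulAction

open scoped Pointwise

theorem MulAction.IsBlock.smul_eq_self_of_prime_orderOf {G X : Type*} [Group G] [MulAction G X]
    [Finite X] [IsPretransitive G X] {B : Set X} (hB : IsBlock G B) (hB₂ : B.Nontrivial) {g : G}
    (hg : (orderOf g).Prime) (hX : Nat.card X < 2 * orderOf g) : g • B = B := by
  have : Fact (orderOf g).Prime := ⟨hg⟩
  have hpgroup : IsPGroup (orderOf g) (Subgroup.zpowers g) :=
    IsPGroup.of_card (n := 1) (by rw [Nat.card_zpowers, pow_one])
  have htranslates : 2 * (orbit G B).ncard ≤ Nat.card X := by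
    by_contra! h
    exact hB₂.not_subsingleton (hB.subsingleton_of_card_lt h)
  have hsmall : (orbit (Subgroup.zpowers g) B).ncard < orderOf g :=
    calc (orbit (Subgroup.zpowers g) B).ncard
        ≤ (orbit G B).ncard := Set.ncard_le_ncard (orbit_subgroup_subset _ B) (Set.toFinite _)
      _ < orderOf g := by omega
  obtain ⟨k, hk⟩ := hpgroup.card_orbit B
  rw [Nat.card_coe_set_eq] at hk
  have hk0 : k = 0 := by
    by_contra hk0
    exact (Nat.le_self_pow hk0 _).not_gt (hk ▸ hsmall)
  obtain ⟨C, hC⟩ := Set.ncard_eq_one.mp (hk0 ▸ hk)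
  have hgB : g • B ∈ orbit (Subgroup.zpowers g) B := ⟨⟨g, Subgroup.mem_zpowers g⟩, rfl⟩
  rw [hC] at hgB
  exact hgB.trans (hC ▸ mem_orbit_self B).symm

namespace Equiv.Perm

variable {α : Type*} [Fintype α] [DecidableEq α]

theorem IsCycle.support_subset_of_mapsTo {σ : Perm α} (hσ : σ.IsCycle) {B : Set α}
    (hB : Set.MapsTo σ B B) {x : α} (hxB : x ∈ B) (hx : σ x ≠ x) : (σ.support : Set α) ⊆ B := by
  intro y hy
  obtain ⟨i, rfl⟩ := hσ.exists_pow_eq hx (mem_support.mp hy)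
  rw [coe_pow]
  exact hB.iterate i hxB

theorem isPreprimitive_of_isCycle_mem_of_card_lt {G : Subgroup (Perm α)} [IsPretransitive G α]
    {σ : Perm α} (hσG : σ ∈ G) (hσ : σ.IsCycle) (hσp : σ.support.card.Prime)
    (hα : Fintype.card α < 2 * σ.support.card) : IsPreprimitive G α := by
  have hord : orderOf (⟨σ, hσG⟩ : G) = σ.support.card := by rw [Subgroup.orderOf_mk, hσ.orderOf]
  have ⟨a, ha, _⟩ := hσ
  refine .of_isTrivialBlock_base a fun {B} haB hB ↦ ?_
  rcases B.subsingleton_or_nontrivial with hB₁ | hB₂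
  · exact .inl hB₁
  have hfix : (⟨σ, hσG⟩ : G) • B = B :=
    hB.smul_eq_self_of_prime_orderOf hB₂ (hord ▸ hσp) (by rwa [hord, Nat.card_eq_fintype_card])
  have hsupport : (σ.support : Set α) ⊆ B :=
    hσ.support_subset_of_mapsTo (fun y hy ↦ hfix ▸ Set.smul_mem_smul_set hy) haB ha
  refine .inr (hB.eq_univ_of_card_lt ?_)
  calc Nat.card α < 2 * σ.support.card := by rwa [Nat.card_eq_fintype_card]
    _ ≤ B.ncard * 2 := by
      rw [mul_comm, ← Set.ncard_coe_finset]
      exact Nat.mul_le_mul_right 2 (Set.ncard_le_ncard hsupport)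

end Equiv.Perm

/-- Lemma 2.2(ii): a transitive subgroup of `S_n` containing a transposition and a
`p`-cycle for a prime `p > n/2` is all of `S_n`. -/
theorem transitive_subgroup_with_transposition_and_large_prime_cycle_eq_top
    (n : ℕ) (G : Subgroup (Equiv.Perm (Fin n)))
    (htrans : ∀ x y : Fin n, ∃ g ∈ G, g x = y)
    (hswap : ∃ g ∈ G, Equiv.Perm.IsSwap g)
    (hcycle : ∃ g ∈ G, ∃ p : ℕ, p.Prime ∧ n < 2 * p ∧ g.IsCycle ∧ g.support.card = p) :
    G = ⊤ := by
  obtain ⟨σ, hσG, p, hp, hnp, hσ, rfl⟩ := hcycle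
  obtain ⟨τ, hτG, hτ⟩ := hswap
  have : IsPretransitive G (Fin n) :=
    ⟨fun x y ↦ let ⟨g, hg, hgx⟩ := htrans x y; ⟨⟨g, hg⟩, hgx⟩⟩
  have hG : IsPreprimitive G (Fin n) :=
    Perm.isPreprimitive_of_isCycle_mem_of_card_lt hσG hσ hp (by rwa [Fintype.card_fin])
  exact Perm.subgroup_eq_top_of_isPreprimitive_of_isSwap_mem hG τ hτ hτG
end

section
/- Let p be a prime, n a positive integer, and A a rational number with p-adic valuation v_p(A) = 1 such that the polynomial f(X) = X^a (X - A)^{n-a} + A has p-integral coefficients (e.g. A ∈ ℤ_p with v_p(A) = 1, and a < n a positive integer). Then for every positive integer k, the k-th compositional iterate f^{∘k} is an Eisenstein polynomial at p; in particular f^{∘k} is irreducible over ℚ_p. -/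
/-!
Write `f = X^a (X - A)^(n-a) + A`. Since `p ∣ A`, `f ≡ X^n (mod p)`, so every iterate
`f^{∘k}` is monic with `f^{∘k} ≡ X^{n^k} (mod p)`. Its constant term is
`f^{∘k}(0) = f^{∘(k-1)}(A) = A`, because `f(0) = A` and `A` is a fixed point of `f`; as
`v_p(A) = 1` it is not divisible by `p^2`. So `f^{∘k}` is Eisenstein, and by Gauss's lemma
it stays irreducible over `ℚ_p`.
-/

open Polynomial

/-- `polyIter f k` is the `k`-th compositional iterate `f^{∘k}` of the polynomial `f`. -/
noncomputable def polyIter {R : Type*} [CommSemiring R] (f : Polynomial R) : ℕ → Polynomial R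
  | 0 => Polynomial.X
  | k + 1 => (polyIter f k).comp f

namespace Polynomial

section CommSemiring

variable {R : Type*} [CommSemiring R]

lemma map_polyIter {S : Type*} [CommSemiring S] (φ : R →+* S) (f : R[X]) (k : ℕ) :
    (polyIter f k).map φ = polyIter (f.map φ) k := by
  induction k with
  | zero => simp [polyIter]
  | succ k ih => simp [polyIter, Polynomial.map_comp, ih]

lemma polyIter_X_pow (n k : ℕ) : polyIter (X ^ n : R[X]) k = X ^ n ^ k := by
  induction k with
  | zero => simp [polyIter]
  | succ k ih => rw [polyIter, ih, X_pow_comp, ← pow_mul, pow_succ']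

lemma eval_polyIter (f : R[X]) (k : ℕ) (x : R) :
    (polyIter f k).eval x = (f.eval ·)^[k] x := by
  induction k generalizing x with
  | zero => simp [polyIter]
  | succ k ih => rw [polyIter, eval_comp, ih, Function.iterate_succ_apply]

lemma coeff_zero_polyIter {f : R[X]} (hfix : Function.IsFixedPt (f.eval ·) (f.coeff 0))
    {k : ℕ} (hk : k ≠ 0) : (polyIter f k).coeff 0 = f.coeff 0 := by
  obtain ⟨k, rfl⟩ := Nat.exists_eq_add_one_of_ne_zero hk
  rw [coeff_zero_eq_eval_zero, eval_polyIter, Function.iterate_succ_apply,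
    ← coeff_zero_eq_eval_zero, hfix.iterate]

lemma IsMonicOfDegree.polyIter [Nontrivial R] {f : R[X]} {n : ℕ} (hf : IsMonicOfDegree f n)
    (hn : n ≠ 0) (k : ℕ) : IsMonicOfDegree (_root_.polyIter f k) (n ^ k) := by
  induction k with
  | zero => simpa [_root_.polyIter] using isMonicOfDegree_X R
  | succ k ih => simpa [_root_.polyIter, pow_succ] using ih.comp hn hf

end CommSemiring

section CommRing

variable {R : Type*} [CommRing R] {I : Ideal R} {f : R[X]}

lemma Monic.isEisensteinAt_iff (hf : f.Monic) :
    f.IsEisensteinAt I ↔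
      f.map (Ideal.Quotient.mk I) = X ^ f.natDegree ∧ f.coeff 0 ∉ I ^ 2 := by
  refine ⟨fun h ↦ ⟨IsDistinguishedAt.map_eq_X_pow ⟨h.isWeaklyEisensteinAt, hf⟩, h.notMem⟩,
    fun ⟨hmap, h0⟩ ↦ hf.isEisensteinAt_of_mem_of_notMem ?_ (fun {i} hi ↦ ?_) h0⟩
  · rintro rfl
    exact h0 (by rw [Ideal.top_pow]; trivial)
  · rw [← Ideal.Quotient.eq_zero_iff_mem, ← coeff_map, hmap, coeff_X_pow, if_neg hi.ne]

lemma IsEisensteinAt.polyIter (hf : f.IsEisensteinAt I) (hmonic : f.Monic)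
    (hdeg : f.natDegree ≠ 0) (hfix : Function.IsFixedPt (f.eval ·) (f.coeff 0))
    {k : ℕ} (hk : k ≠ 0) : (polyIter f k).IsEisensteinAt I := by
  have : Nontrivial R := nontrivial_of_ne _ _ (ne_of_mem_of_not_mem I.zero_mem hf.leading)
  have hiter := IsMonicOfDegree.polyIter ⟨rfl, hmonic⟩ hdeg k
  obtain ⟨hmap, h0⟩ := hmonic.isEisensteinAt_iff.1 hf
  rw [hiter.monic.isEisensteinAt_iff, hiter.natDegree_eq, map_polyIter, hmap, polyIter_X_pow,
    coeff_zero_polyIter hfix hk]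
  exact ⟨rfl, h0⟩

lemma IsEisensteinAt.irreducible_map_fraction_map [IsDomain R] [IsIntegrallyClosed R]
    {K : Type*} [Field K] [Algebra R K] [IsFractionRing R K] (hf : f.IsEisensteinAt I)
    (hI : I.IsPrime) (hmonic : f.Monic) (hdeg : 0 < f.natDegree) :
    Irreducible (f.map (algebraMap R K)) :=
  hmonic.irreducible_iff_irreducible_map_fraction_map.1 (hf.irreducible hI hmonic.isPrimitive hdeg)

end CommRing

end Polynomial

section FixedPointFamily

variable {R : Type*} [CommRing R] (A : R) (a b : ℕ)

lemma isMonicOfDegree_X_pow_mul_X_sub_C_pow_add_C [Nontrivial R] (hab : a + b ≠ 0) :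
    IsMonicOfDegree (X ^ a * (X - C A) ^ b + C A) (a + b) := by
  simpa using ((isMonicOfDegree_X_pow R a).mul ((isMonicOfDegree_X_sub_one A).pow b)).add_right
    (by rw [natDegree_C]; omega)

lemma coeff_zero_X_pow_mul_X_sub_C_pow_add_C (ha : a ≠ 0) :
    (X ^ a * (X - C A) ^ b + C A).coeff 0 = A := by
  simp [coeff_zero_eq_eval_zero, zero_pow ha]

lemma eval_X_pow_mul_X_sub_C_pow_add_C_self (hb : b ≠ 0) :
    (X ^ a * (X - C A) ^ b + C A).eval A = A := by
  simp [zero_pow hb]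

lemma map_X_pow_mul_X_sub_C_pow_add_C {I : Ideal R} (hA : A ∈ I) :
    (X ^ a * (X - C A) ^ b + C A).map (Ideal.Quotient.mk I) = X ^ (a + b) := by
  simp [Ideal.Quotient.eq_zero_iff_mem.2 hA, pow_add]

lemma isEisensteinAt_X_pow_mul_X_sub_C_pow_add_C [Nontrivial R] {I : Ideal R} (hA : A ∈ I)
    (hA2 : A ∉ I ^ 2) (ha : a ≠ 0) : (X ^ a * (X - C A) ^ b + C A).IsEisensteinAt I := by
  have hf := isMonicOfDegree_X_pow_mul_X_sub_C_pow_add_C A a b (by omega)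
  rw [hf.monic.isEisensteinAt_iff, hf.natDegree_eq,
    coeff_zero_X_pow_mul_X_sub_C_pow_add_C A a b ha]
  exact ⟨map_X_pow_mul_X_sub_C_pow_add_C A a b hA, hA2⟩

end FixedPointFamily

lemma PadicInt.mem_span_p_and_notMem_sq_of_valuation_eq_one {p : ℕ} [Fact p.Prime] {A : ℤ_[p]}
    (hA : A.valuation = 1) :
    A ∈ Ideal.span {(p : ℤ_[p])} ∧ A ∉ Ideal.span {(p : ℤ_[p])} ^ 2 := by
  have hA0 : A ≠ 0 := by rintro rfl; simp at hA
  rw [Ideal.span_singleton_pow]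
  constructor
  · simpa using (mem_span_pow_iff_le_valuation A hA0 1).2 hA.ge
  · rw [mem_span_pow_iff_le_valuation A hA0, hA]
    norm_num

/-- Lemma 3.3: if `v_p(A) = 1` then every iterate of `f(X) = X^a (X-A)^{n-a} + A`
is Eisenstein at `p`; in particular it is irreducible over `ℚ_p`. -/
theorem iterates_eisenstein_and_irreducible
    (p : ℕ) [hp : Fact p.Prime] (a n : ℕ) (h0 : 0 < a) (han : a < n)
    (A : ℤ_[p]) (hA : A.valuation = 1) :
    ∀ k : ℕ, 0 < k →
      (polyIter (X ^ a * (X - C A) ^ (n - a) + C A) k).IsEisensteinAt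
          (Ideal.span {(p : ℤ_[p])}) ∧
      Irreducible ((polyIter (X ^ a * (X - C A) ^ (n - a) + C A) k).map
          (algebraMap ℤ_[p] ℚ_[p])) := by
  intro k hk
  set f : ℤ_[p][X] := X ^ a * (X - C A) ^ (n - a) + C A
  obtain ⟨hAp, hAp2⟩ := PadicInt.mem_span_p_and_notMem_sq_of_valuation_eq_one hA
  have hf : IsMonicOfDegree f n := by
    simpa [Nat.add_sub_cancel' han.le] using
      isMonicOfDegree_X_pow_mul_X_sub_C_pow_add_C A a (n - a) (by omega)
  have hfix : Function.IsFixedPt (f.eval ·) (f.coeff 0) := by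
    rw [coeff_zero_X_pow_mul_X_sub_C_pow_add_C A a (n - a) h0.ne']
    exact eval_X_pow_mul_X_sub_C_pow_add_C_self A a (n - a) (by omega)
  have hiter := hf.polyIter (by omega) k
  have hEis := (isEisensteinAt_X_pow_mul_X_sub_C_pow_add_C A a (n - a) hAp hAp2 h0.ne').polyIter
    hf.monic (by rw [hf.natDegree_eq]; omega) hfix hk.ne'
  refine ⟨hEis, hEis.irreducible_map_fraction_map ?_ hiter.monic ?_⟩
  · exact (Ideal.span_singleton_prime (NeZero.ne _)).2 PadicInt.prime_p
  · rw [hiter.natDegree_eq]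
    exact pow_pos (by omega) k
end

section
/- Let l be a prime integer not dividing n - 1, and let B ∈ ℚ_l satisfy v_l(B) = -1. Then the polynomial g(X) = X(X - B)^{n-1} + B splits completely over an unramified extension of ℚ_l. -/
/-!
With `d = n - 1`, the substitution `X = B + 1 / Y` gives
`g (B + 1 / Y) = B * Y ^ (-(d + 1)) * (Y ^ (d + 1) + Y + 1 / B)`, so it suffices to find `d + 1`
distinct roots of `h = Y ^ (d + 1) + Y + t`, where `t = 1 / B` lies in the maximal ideal of `ℤ_l`.
Modulo `l`, `h ≡ Y * (Y ^ d + 1)`, whose roots `0` and `ζ ^ (2 j + 1)` (`ζ` a primitive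
`2d`-th root of unity) are simple and pairwise distinct because `l ∤ d`. The ring `ℤ_l[ζ]` is finite
over the complete noetherian ring `ℤ_l`, hence `l`-adically complete and Henselian, so these roots
lift to roots of `h`. One may take `ζ` in `ℚ_l(ζ_m)` with `m = 2d` for odd `l`, and with `m = d`
(odd) and `ζ = -ζ_d` for `l = 2`; in both cases `l ∤ m`.
-/

open Polynomial

universe u

theorem IsAdicComplete.of_finite {R : Type u} [CommRing R] [IsNoetherianRing R] (I : Ideal R)
    [IsAdicComplete I R] (M : Type u) [AddCommGroup M] [Module R M] [Module.Finite R M] :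
    IsAdicComplete I M := by
  rw [← AdicCompletion.of_bijective_iff]
  let e : M ≃ₗ[R] TensorProduct R (AdicCompletion I R) M :=
    (TensorProduct.lid R M).symm ≪≫ₗ (AdicCompletion.ofLinearEquiv I R).rTensor M
  have h : ⇑(AdicCompletion.of I M) = AdicCompletion.ofTensorProduct I M ∘ e := by
    funext x
    simp only [e, Function.comp_apply, LinearEquiv.trans_apply, TensorProduct.lid_symm_apply,
      LinearEquiv.rTensor_tmul, AdicCompletion.ofLinearEquiv_apply,
      AdicCompletion.ofTensorProduct_tmul]
    exact (one_smul _ _).symm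
  rw [h]
  exact (AdicCompletion.ofTensorProduct_bijective_of_finite_of_isNoetherian I M).comp e.bijective

theorem IsPrimitiveRoot.neg_of_odd {R : Type*} [CommRing R] [Nontrivial R] (hR : ringChar R ≠ 2)
    {ζ : R} {n : ℕ} (hζ : IsPrimitiveRoot ζ n) (hn : Odd n) : IsPrimitiveRoot (-ζ) (2 * n) := by
  convert IsPrimitiveRoot.orderOf (-ζ)
  rw [neg_eq_neg_one_mul, (Commute.all _ _).orderOf_mul_eq_mul_orderOf_of_coprime,
    orderOf_neg_one, if_neg hR, ← hζ.eq_orderOf]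
  rw [orderOf_neg_one, if_neg hR, ← hζ.eq_orderOf]
  exact Nat.coprime_two_left.2 hn

theorem Polynomial.splits_of_injective_isRoot {R ι : Type*} [CommRing R] [IsDomain R] [Fintype ι]
    {f : R[X]} (hf : f ≠ 0) {x : ι → R} (hx : Function.Injective x) (hroot : ∀ i, f.IsRoot (x i))
    (hcard : f.natDegree ≤ Fintype.card ι) : f.Splits := by
  classical
  refine splits_iff_card_roots.2 (le_antisymm (card_roots' f) (hcard.trans ?_))
  calc Fintype.card ι = (Finset.univ.image x).card := (Finset.card_image_of_injective _ hx).symm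
    _ ≤ f.roots.toFinset.card := Finset.card_le_card fun _ hy ↦ by
        obtain ⟨i, -, rfl⟩ := Finset.mem_image.1 hy
        exact Multiset.mem_toFinset.2 ((mem_roots hf).2 (hroot i))
    _ ≤ f.roots.card := Multiset.toFinset_card_le _

theorem HenselianRing.exists_injective_isRoot {A ι : Type*} [CommRing A] {I : Ideal A}
    [HenselianRing A I] {f : A[X]} (hf : f.Monic) (a : ι → A) (ha : ∀ i, f.eval (a i) ∈ I)
    (ha' : ∀ i, IsUnit (Ideal.Quotient.mk I (f.derivative.eval (a i))))
    (hdist : Pairwise fun i j ↦ a i - a j ∉ I) :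
    ∃ y : ι → A, Function.Injective y ∧ ∀ i, f.IsRoot (y i) := by
  choose y hy hya using fun i ↦ HenselianRing.is_henselian f hf (a i) (ha i) (ha' i)
  refine ⟨y, fun i j hij ↦ ?_, hy⟩
  by_contra hne
  apply hdist hne
  have := I.sub_mem (hya j) (hya i)
  rwa [hij, sub_sub_sub_cancel_left] at this

theorem Ideal.sub_notMem_of_pow_eq_pow {A : Type*} [CommRing A] [IsDomain A] {J : Ideal A}
    [Nontrivial (A ⧸ J)] {d : ℕ} (hd : IsUnit (d : A ⧸ J)) {α β : A}
    (hβ : IsUnit (Ideal.Quotient.mk J β)) (hαβ : α ^ d = β ^ d) (hne : α ≠ β) : α - β ∉ J := by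
  intro hmem
  have hsum : ∑ i ∈ Finset.range d, α ^ i * β ^ (d - 1 - i) = 0 := by
    have := geom_sum₂_mul α β d
    rw [hαβ, sub_self] at this
    exact (mul_eq_zero.1 this).resolve_right (sub_ne_zero.2 hne)
  have hαβ' : Ideal.Quotient.mk J α = Ideal.Quotient.mk J β := Ideal.Quotient.eq.2 hmem
  have hterm : ∀ i ∈ Finset.range d,
      Ideal.Quotient.mk J (α ^ i * β ^ (d - 1 - i)) = Ideal.Quotient.mk J β ^ (d - 1) := by
    intro i hi
    rw [map_mul, map_pow, map_pow, hαβ', ← pow_add, Nat.add_sub_of_le (by simp at hi; omega)]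
  have := congrArg (Ideal.Quotient.mk J) hsum
  rw [map_sum, Finset.sum_congr rfl hterm, Finset.sum_const, Finset.card_range, nsmul_eq_mul,
    map_zero] at this
  exact (hd.mul (hβ.pow _)).ne_zero this

theorem HenselianRing.exists_injective_roots_X_pow_add_X_add_C {A : Type*} [CommRing A]
    [IsDomain A] {J : Ideal A} [HenselianRing A J] [Nontrivial (A ⧸ J)] {d : ℕ}
    (hd : IsUnit (d : A ⧸ J)) {ζ : A} (hζ : IsPrimitiveRoot ζ (2 * d)) {t : A} (ht : t ∈ J) :
    ∃ y : Option (Fin d) → A, Function.Injective y ∧ ∀ i, y i ^ (d + 1) + y i + t = 0 := by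
  have hd0 : d ≠ 0 := by rintro rfl; simp at hd
  have hζd : ζ ^ d = -1 := (hζ.pow (by omega) (mul_comm 2 d)).eq_neg_one_of_two_right
  -- approximate roots: `X ^ (d + 1) + X = X * (X ^ d + 1)` vanishes at `0` and at odd powers of `ζ`
  let a : Option (Fin d) → A := fun i ↦ i.elim 0 fun j ↦ ζ ^ (2 * (j : ℕ) + 1)
  have ha_pow : ∀ j : Fin d, (ζ ^ (2 * (j : ℕ) + 1)) ^ d = -1 := fun j ↦ by
    rw [← pow_mul, mul_comm, pow_mul, hζd, (odd_two_mul_add_one _).neg_one_pow]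
  have ha_unit : ∀ j : Fin d, IsUnit (Ideal.Quotient.mk J (ζ ^ (2 * (j : ℕ) + 1))) := fun j ↦
    ((hζ.isUnit (by omega)).pow _).map _
  have heval : ∀ i, (X ^ (d + 1) + X + C t).eval (a i) ∈ J := by
    rintro (_ | j)
    · simpa [a] using ht
    · simp only [a, Option.elim, eval_add, eval_pow, eval_X, eval_C]
      rwa [pow_succ, ha_pow, neg_one_mul, neg_add_cancel, zero_add]
  have hderiv :
      ∀ i, IsUnit (Ideal.Quotient.mk J ((X ^ (d + 1) + X + C t).derivative.eval (a i))) := by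
    rintro (_ | j)
    · simp [a, hd0]
    · simp only [a, Option.elim, derivative_X_pow, derivative_X, derivative_C,
        eval_add, eval_mul, eval_pow, eval_X, eval_one, eval_natCast, add_zero,
        Nat.add_sub_cancel, ha_pow, map_add, map_mul, map_neg, map_one, map_natCast]
      convert hd.neg using 1
      push_cast
      ring
  have hdist : Pairwise fun i j ↦ a i - a j ∉ J := by
    have hnotMem : ∀ j : Fin d, ζ ^ (2 * (j : ℕ) + 1) ∉ J := fun j h ↦
      (ha_unit j).ne_zero (Ideal.Quotient.eq_zero_iff_mem.2 h)
    rintro (_ | j) (_ | k) hne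
    · exact absurd rfl hne
    · simpa [a] using hnotMem k
    · simpa [a] using hnotMem j
    · refine Ideal.sub_notMem_of_pow_eq_pow hd (ha_unit k) ((ha_pow j).trans (ha_pow k).symm)
        fun h ↦ hne ?_
      have := hζ.pow_inj (by omega) (by omega) h
      simp only [Option.some.injEq]
      omega
  obtain ⟨y, hy, hroot⟩ :=
    HenselianRing.exists_injective_isRoot (by monicity!) a heval hderiv hdist
  exact ⟨y, hy, fun i ↦ by simpa using hroot i⟩

theorem exists_injective_roots_X_pow_add_X_add_C {R K : Type u} [CommRing R] [IsNoetherianRing R]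
    {I : Ideal R} [IsAdicComplete I R] [Field K] [Algebra R K] {d : ℕ} (hd : IsUnit (d : R))
    {ζ : K} (hζ : IsPrimitiveRoot ζ (2 * d)) {t : R} (ht : t ∈ I) :
    ∃ y : Option (Fin d) → K, Function.Injective y ∧
      ∀ i, y i ^ (d + 1) + y i + algebraMap R K t = 0 := by
  have : Nontrivial R := (algebraMap R K).domain_nontrivial
  have hd0 : d ≠ 0 := by rintro rfl; simp at hd
  obtain ⟨A, _, hζA⟩ : ∃ A : Subalgebra R K, Module.Finite R A ∧ ζ ∈ A :=
    ⟨_, Algebra.finite_adjoin_simple_of_isIntegral (hζ.isIntegral (by omega)).tower_top,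
      Algebra.self_mem_adjoin_singleton R ζ⟩
  let J := I.map (algebraMap R A)
  have hJ : IsAdicComplete J A := (IsAdicComplete.map_algebraMap_iff I A).2 (.of_finite I A)
  have : Nontrivial (A ⧸ J) := Ideal.Quotient.nontrivial_iff.2 fun h ↦
    not_subsingleton A ((h ▸ hJ).subsingleton A)
  obtain ⟨y, hy, hroot⟩ := HenselianRing.exists_injective_roots_X_pow_add_X_add_C
    (by simpa using hd.map (algebraMap R (A ⧸ J)))
    ((IsPrimitiveRoot.coe_submonoidClass_iff (ζ := ⟨ζ, hζA⟩)).1 hζ) (Ideal.mem_map_of_mem _ ht)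
  exact ⟨fun i ↦ y i, Subtype.val_injective.comp hy,
    fun i ↦ by simpa using congrArg Subtype.val (hroot i)⟩

theorem isRoot_X_mul_X_sub_C_pow_add_C {K : Type*} [Field K] {b y : K} (hb : b ≠ 0) {d : ℕ}
    (hy : y ^ (d + 1) + y + b⁻¹ = 0) : (X * (X - C b) ^ d + C b).IsRoot (b + y⁻¹) := by
  have hy0 : y ≠ 0 := by rintro rfl; simp [hb] at hy
  have h1 : y⁻¹ ^ (d + 1) * y ^ (d + 1) = 1 := by rw [← mul_pow, inv_mul_cancel₀ hy0, one_pow]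
  simp only [IsRoot, eval_add, eval_mul, eval_pow, eval_sub, eval_X, eval_C, add_sub_cancel_left]
  -- `g (b + y⁻¹) = b * y⁻¹ ^ (d + 1) * (y ^ (d + 1) + y + b⁻¹)`
  linear_combination b * y⁻¹ ^ (d + 1) * hy - b * h1 - b * y⁻¹ ^ d * inv_mul_cancel₀ hy0
    - y⁻¹ ^ (d + 1) * mul_inv_cancel₀ hb

theorem splits_X_mul_X_sub_C_pow_add_C {l : ℕ} [Fact l.Prime] {K : Type} [Field K]
    [Algebra ℚ_[l] K] {d : ℕ} (hd : ¬ l ∣ d) {ζ : K} (hζ : IsPrimitiveRoot ζ (2 * d))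
    {B : ℚ_[l]} (hB : 1 < ‖B‖) :
    ((X * (X - C B) ^ d + C B).map (algebraMap ℚ_[l] K)).Splits := by
  let _ : Algebra ℤ_[l] K := ((algebraMap ℚ_[l] K).comp PadicInt.Coe.ringHom).toAlgebra
  have hB0 : B ≠ 0 := norm_pos_iff.1 (one_pos.trans hB)
  let t : ℤ_[l] := ⟨B⁻¹, by rw [norm_inv]; exact inv_le_one_of_one_le₀ hB.le⟩
  have ht : t ∈ IsLocalRing.maximalIdeal ℤ_[l] :=
    PadicInt.mem_nonunits.2 (by simpa [t, norm_inv] using inv_lt_one_of_one_lt₀ hB)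
  have hdu : IsUnit (d : ℤ_[l]) := PadicInt.isUnit_iff.2
    (PadicInt.norm_natCast_eq_one_iff.2 ((Nat.Prime.coprime_iff_not_dvd Fact.out).2 hd))
  obtain ⟨y, hy, hroot⟩ := exists_injective_roots_X_pow_add_X_add_C hdu hζ ht
  set b := algebraMap ℚ_[l] K B
  have hb : b ≠ 0 := by simpa [b] using hB0
  have htb : algebraMap ℤ_[l] K t = b⁻¹ := map_inv₀ (algebraMap ℚ_[l] K) B
  have hdeg : (X * (X - C b) ^ d + C b).natDegree = d + 1 := by compute_degree! <;> omega
  have hmap : (X * (X - C B) ^ d + C B : ℚ_[l][X]).map (algebraMap ℚ_[l] K) =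
      X * (X - C b) ^ d + C b := by simp [b]
  rw [hmap]
  refine splits_of_injective_isRoot (x := fun i ↦ b + (y i)⁻¹) (fun h ↦ by simp [h] at hdeg)
    (fun i j hij ↦ hy (inv_injective (add_left_cancel hij)))
    (fun i ↦ isRoot_X_mul_X_sub_C_pow_add_C hb (htb ▸ hroot i)) (by simp [hdeg])

theorem splits_over_unramified_extension_general
    (l n : ℕ) [hl : Fact l.Prime] (hln : ¬ l ∣ (n - 1))
    (B : ℚ_[l]) (hB : B.valuation = -1) :
    ∃ m : ℕ+, ¬ l ∣ (m : ℕ) ∧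
      ((X * (X - C B) ^ (n - 1) + C B : Polynomial ℚ_[l]).map
        (algebraMap ℚ_[l] (CyclotomicField m ℚ_[l]))).Splits := by
  have hd : n - 1 ≠ 0 := fun h ↦ hln (h ▸ dvd_zero l)
  have hB' : 1 < ‖B‖ := by
    have hB0 : B ≠ 0 := by rintro rfl; simp at hB
    rw [Padic.norm_eq_zpow_neg_valuation hB0, hB, neg_neg, zpow_one]
    exact_mod_cast hl.out.one_lt
  by_cases hl2 : l = 2
  · have hodd : Odd (n - 1) := Nat.odd_iff.2 (by subst hl2; omega)
    let m : ℕ+ := ⟨n - 1, Nat.pos_of_ne_zero hd⟩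
    have hζ := (IsCyclotomicExtension.zeta_spec m ℚ_[l] (CyclotomicField m ℚ_[l])).neg_of_odd
      (by simp) hodd
    exact ⟨m, hln, splits_X_mul_X_sub_C_pow_add_C hln hζ hB'⟩
  · let m : ℕ+ := ⟨2 * (n - 1), by omega⟩
    refine ⟨m, fun h ↦ ?_,
      splits_X_mul_X_sub_C_pow_add_C hln (IsCyclotomicExtension.zeta_spec m ℚ_[l] _) hB'⟩
    rcases hl.out.dvd_mul.1 h with h2 | h
    · exact hl2 ((Nat.prime_dvd_prime_iff_eq hl.out Nat.prime_two).1 h2)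
    · exact hln h

/-- Lemma 3.4: if `l ∤ n - 1` and `v_l(B) = -1`, then `g(X) = X(X-B)^{n-1} + B`
splits completely over an unramified extension of `ℚ_l`.  (The finite unramified
extensions of `ℚ_l` are exactly the subfields of the cyclotomic fields `ℚ_l(ζ_m)`
with `l ∤ m`, so this is formalized as: `g` splits over some `ℚ_l(ζ_m)` with `l ∤ m`.) -/
theorem splits_over_unramified_extension
    (l n : ℕ) [hl : Fact l.Prime] (hn2 : 2 ≤ n) (hln : ¬ l ∣ (n - 1))
    (B : ℚ_[l]) (hB : B.valuation = -1) :
    ∃ m : ℕ+, ¬ l ∣ (m : ℕ) ∧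
      ((X * (X - C B) ^ (n - 1) + C B : Polynomial ℚ_[l]).map
        (algebraMap ℚ_[l] (CyclotomicField m ℚ_[l]))).Splits :=
  splits_over_unramified_extension_general l n (hl := hl) hln B hB
end

section
/- Define the sequence c_0 = a/n and c_k = A^{n-1} c_{k-1}^a (c_{k-1} - 1)^{n-a} + 1 for k ≥ 1, where f(X) = X^a(X-A)^{n-a} + A and 0 < a < n. Then c_k = f^{∘k}((a/n)A)/A for every positive integer k. -/
/-! Scaling by `A` conjugates `f(X) = X^a (X - A)^(n-a) + A` to
`g(x) = A^(n-1) x^a (x - 1)^(n-a) + 1`, since `f (A * x) = A * g x`. The sequence `c` is the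
`g`-orbit of `a/n`, hence `A * c k` is the `f`-orbit of `(a/n) A`. -/

theorem eq_iterate_of_succ_eq {α : Type*} {g : α → α} {c : ℕ → α}
    (hc : ∀ k, c (k + 1) = g (c k)) (k : ℕ) : c k = g^[k] (c 0) := by
  induction k with
  | zero => rfl
  | succ k ih => rw [hc, ih, Function.iterate_succ_apply']

theorem semiconj_mul_left_scaled_map {R : Type*} [CommRing R] {a n : ℕ} (han : a ≤ n)
    (hn : 0 < n) (A : R) :
    Function.Semiconj (A * ·) (fun x : R => A ^ (n - 1) * x ^ a * (x - 1) ^ (n - a) + 1)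
      (fun x : R => x ^ a * (x - A) ^ (n - a) + A) := by
  intro x
  have hpow : A ^ a * A ^ (n - a) = A * A ^ (n - 1) := by
    rw [← pow_add, Nat.add_sub_cancel' han, ← pow_succ', Nat.sub_add_cancel hn]
  calc A * (A ^ (n - 1) * x ^ a * (x - 1) ^ (n - a) + 1)
      = A ^ a * A ^ (n - a) * x ^ a * (x - 1) ^ (n - a) + A := by rw [hpow]; ring
    _ = (A * x) ^ a * (A * (x - 1)) ^ (n - a) + A := by
        rw [mul_pow, mul_pow]; ring
    _ = (A * x) ^ a * (A * x - A) ^ (n - a) + A := by rw [mul_sub_one]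

theorem c_seq_eq_iterate_at_critical_point_general
    (a n : ℕ) (han : a < n)
    (A : ℚ) (hA : A ≠ 0)
    (c : ℕ → ℚ) (hc0 : c 0 = (a : ℚ) / n)
    (hcrec : ∀ k : ℕ, c (k + 1) = A ^ (n - 1) * (c k) ^ a * (c k - 1) ^ (n - a) + 1) :
    ∀ k : ℕ, 0 < k →
      c k = (fun x : ℚ => x ^ a * (x - A) ^ (n - a) + A)^[k] ((a : ℚ) * A / n) / A := by
  intro k _
  have hconj := (semiconj_mul_left_scaled_map han.le (by omega) A).iterate_right k (c 0)
  rw [eq_iterate_of_succ_eq (g := fun x => A ^ (n - 1) * x ^ a * (x - 1) ^ (n - a) + 1) hcrec k,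
    eq_div_iff hA, mul_comm, hconj, hc0, mul_div_assoc', mul_comm A]

/-- The sequence `c_0 = a/n`, `c_k = A^{n-1} c_{k-1}^a (c_{k-1}-1)^{n-a} + 1`
satisfies `c_k = f^{∘k}((a/n)A)/A` for all `k ≥ 1`, where `f(X) = X^a(X-A)^{n-a} + A`. -/
theorem c_seq_eq_iterate_at_critical_point
    (a n : ℕ) (h0 : 0 < a) (han : a < n) (hcop : Nat.Coprime a n)
    (A : ℚ) (hA : A ≠ 0)
    (c : ℕ → ℚ) (hc0 : c 0 = (a : ℚ) / n)
    (hcrec : ∀ k : ℕ, c (k + 1) = A ^ (n - 1) * (c k) ^ a * (c k - 1) ^ (n - a) + 1) :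
    ∀ k : ℕ, 0 < k →
      c k = (fun x : ℚ => x ^ a * (x - A) ^ (n - a) + A)^[k] ((a : ℚ) * A / n) / A :=
  c_seq_eq_iterate_at_critical_point_general a n han A hA c hc0 hcrec
end

section
/- Let p be an odd prime dividing the numerator A^+ of A ∈ ℚ (written in lowest terms A = A^+/A^- with A^+ > 0), and suppose p does not divide n. With c_0 = a/n and c_k = A^{n-1} c_{k-1}^a (c_{k-1}-1)^{n-a} + 1, every c_k is p-integral and c_k ≡ 1 (mod p) for all k ≥ 1. -/
/-!
Work with the `p`-adic valuation `v` on `ℚ`: being `p`-integral means `v x ≤ 1`, and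
`x ≡ 1 (mod p)` means `v (x - 1) < 1`. Since `p ∣ A⁺` we have `v A < 1`, and `n ≥ 2` makes the
exponent of `A` positive, so whenever `c_{k-1}` is `p`-integral the product
`c_k - 1 = A^{n-1} c_{k-1}^a (c_{k-1} - 1)^{n-a}` has valuation `< 1`; in particular `c_k` is again
`p`-integral. The induction starts because `p ∤ n` makes `c_0 = a/n` integral.
-/

namespace Rat

variable {p : ℕ} [Fact p.Prime]

lemma padicValuation_natCast_eq_one {n : ℕ} (hn : ¬ p ∣ n) : padicValuation p n = 1 := by
  rw [← Int.cast_natCast, padicValuation_cast, Int.padicValuation_eq_one_iff]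
  exact_mod_cast hn

lemma padicValuation_lt_one_iff {x : ℚ} : padicValuation p x < 1 ↔ (p : ℤ) ∣ x.num := by
  suffices h : ¬ p ∣ x.den → (padicValuation p x < 1 ↔ (p : ℤ) ∣ x.num) from
    ⟨fun hx => (h (padicValuation_le_one_iff.1 hx.le)).1 hx,
      fun hnum => (h fun hden => Nat.not_coprime_of_dvd_of_dvd (Nat.Prime.one_lt Fact.out)
        (Int.natCast_dvd.1 hnum) hden x.reduced).2 hnum⟩
  intro hden
  rw [← Int.padicValuation_lt_one_iff, ← padicValuation_cast, ← mul_den_eq_num, map_mul,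
    padicValuation_natCast_eq_one hden, mul_one]

lemma padicValuation_div_natCast_le_one (m : ℤ) {n : ℕ} (hn : ¬ p ∣ n) :
    padicValuation p (m / n) ≤ 1 := by
  rw [map_div₀, padicValuation_natCast_eq_one hn, div_one, padicValuation_cast]
  exact Int.padicValuation_le_one p m

end Rat

lemma Valuation.map_pow_mul_pow_mul_sub_one_pow_lt_one {R Γ : Type*} [Ring R]
    [LinearOrderedCommGroupWithZero Γ] (v : Valuation R Γ) {A x : R} (hA : v A < 1)
    (hx : v x ≤ 1) {m : ℕ} (hm : m ≠ 0) (a b : ℕ) : v (A ^ m * x ^ a * (x - 1) ^ b) < 1 := by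
  have hx1 : v (x - 1) ≤ 1 := v.map_sub_le hx v.map_one.le
  simp only [map_mul, map_pow]
  exact mul_lt_one_of_lt_of_le (mul_lt_one_of_lt_of_le (pow_lt_one' hA hm) (pow_le_one' hx a))
    (pow_le_one' hx1 b)

theorem c_seq_p_integral_and_cong_one_general
    (a n : ℕ) (h0 : 0 < a) (han : a < n)
    (A : ℚ) (p : ℕ) (hp : p.Prime)
    (hpA : (p : ℤ) ∣ A.num) (hpn : ¬ p ∣ n)
    (c : ℕ → ℚ) (hc0 : c 0 = (a : ℚ) / n)
    (hcrec : ∀ k : ℕ, c (k + 1) = A ^ (n - 1) * (c k) ^ a * (c k - 1) ^ (n - a) + 1) :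
    ∀ k : ℕ, 0 < k → ¬ p ∣ (c k).den ∧ (p : ℤ) ∣ (c k - 1).num := by
  have : Fact p.Prime := ⟨hp⟩
  set v := Rat.padicValuation p
  have hA : v A < 1 := Rat.padicValuation_lt_one_iff.2 hpA
  have hstep (k : ℕ) (hk : v (c k) ≤ 1) : v (c (k + 1) - 1) < 1 := by
    rw [hcrec, add_sub_cancel_right]
    exact v.map_pow_mul_pow_mul_sub_one_pow_lt_one hA hk (by omega) _ _
  have hint (k : ℕ) : v (c k) ≤ 1 := by
    induction k with
    | zero => simpa [hc0] using Rat.padicValuation_div_natCast_le_one a hpn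
    | succ k ih => simpa using v.map_add_le (hstep k ih).le v.map_one.le
  rintro (_ | k) hk
  · omega
  · exact ⟨Rat.padicValuation_le_one_iff.1 (hint _),
      Rat.padicValuation_lt_one_iff.1 (hstep k (hint k))⟩

/-- If `p` is an odd prime dividing the numerator of `A` but not `n`, then every term of
the sequence `c_0 = a/n`, `c_k = A^{n-1} c_{k-1}^a (c_{k-1}-1)^{n-a} + 1` is `p`-integral
and `c_k ≡ 1 (mod p)` for `k ≥ 1` (i.e. `p` does not divide the denominator of `c_k`
and `p` divides the numerator of `c_k - 1`). -/
theorem c_seq_p_integral_and_cong_one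
    (a n : ℕ) (h0 : 0 < a) (han : a < n) (hcop : Nat.Coprime a n)
    (A : ℚ) (p : ℕ) (hp : p.Prime) (hodd : Odd p)
    (hpA : (p : ℤ) ∣ A.num) (hpn : ¬ p ∣ n)
    (c : ℕ → ℚ) (hc0 : c 0 = (a : ℚ) / n)
    (hcrec : ∀ k : ℕ, c (k + 1) = A ^ (n - 1) * (c k) ^ a * (c k - 1) ^ (n - a) + 1) :
    ∀ k : ℕ, 0 < k → ¬ p ∣ (c k).den ∧ (p : ℤ) ∣ (c k - 1).num :=
  c_seq_p_integral_and_cong_one_general a n h0 han A p hp hpA hpn c hc0 hcrec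
end

section
/- Suppose 0 < a < n, A ∈ ℚ with v_2(A) ≥ 3/(n-1) + n·v_2(n)/(n-1). Define c_0 = a/n and c_k = A^{n-1} c_{k-1}^a (c_{k-1}-1)^{n-a} + 1 for k ≥ 1. Then for all k ≥ 1, c_k is 2-integral and c_k ≡ 1 (mod 8); in particular c_k is a square in ℤ_2^×. -/
/-!
Write `w = v_2(n)`. The recurrence says `c_{k+1} - 1 = A^{n-1} c_k^a (c_k - 1)^{n-a}`.
Both `c_0 = a/n` and `c_0 - 1` have `2`-adic norm at most `2^w`, and `a + (n - a) = n`, so the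
hypothesis `(n-1) v_2(A) ≥ 3 + n w` gives `|c_1 - 1|_2 ≤ |A|_2^{n-1} 2^{nw} ≤ 2^{-3}`.
Once `|c_k - 1|_2 ≤ 2^{-3}`, `c_k` is `2`-integral, so the same estimate (with `2^w ≥ 1` as a crude
bound for `|c_k|_2`) applies again to `c_{k+1}`. Finally `X^2 - c_k` has the approximate root `1`
with `|1 - c_k|_2 < |2|_2^2`, so Hensel's lemma gives a square root, a unit since it is close
to `1`.
-/

namespace padicNorm

theorem le_zpow_neg_padicValRat {p : ℕ} (q : ℚ) :
    padicNorm p q ≤ (p : ℚ) ^ (-padicValRat p q) := by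
  rcases eq_or_ne q 0 with rfl | hq
  · simp only [padicNorm.zero, padicValRat.zero, neg_zero, zpow_zero, zero_le_one]
  · exact (padicNorm.eq_zpow_of_nonzero hq).le

variable {p : ℕ} [Fact p.Prime]

theorem le_of_sub_one_le {q B : ℚ} (hB : 1 ≤ B) (h : padicNorm p (q - 1) ≤ B) :
    padicNorm p q ≤ B :=
  calc padicNorm p q = padicNorm p (q - 1 + 1) := by rw [sub_add_cancel]
    _ ≤ max (padicNorm p (q - 1)) (padicNorm p 1) := padicNorm.nonarchimedean
    _ ≤ B := max_le h (by rwa [padicNorm.one])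

theorem sub_one_le {q B : ℚ} (hB : 1 ≤ B) (h : padicNorm p q ≤ B) :
    padicNorm p (q - 1) ≤ B :=
  padicNorm.sub.trans (max_le h (by rwa [padicNorm.one]))

theorem intCast_div_natCast_le (z : ℤ) (n : ℕ) :
    padicNorm p (z / n) ≤ (p : ℚ) ^ padicValNat p n := by
  rcases eq_or_ne n 0 with rfl | hn
  · simp
  rw [padicNorm.div, padicNorm.eq_zpow_of_nonzero (Nat.cast_ne_zero.mpr hn), padicValRat.of_nat,
    zpow_neg, zpow_natCast, div_inv_eq_mul]
  exact mul_le_of_le_one_left (by positivity) (padicNorm.of_int z)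

theorem not_dvd_den_of_le_one {q : ℚ} (h : padicNorm p q ≤ 1) : ¬ p ∣ q.den := by
  have hq : ‖(q : ℚ_[p])‖ ≤ 1 := by rw [Padic.eq_padicNorm]; exact_mod_cast h
  have hden := PadicInt.isUnit_iff.mp (PadicInt.isUnit_den q hq)
  rw [PadicInt.norm_natCast_eq_one_iff] at hden
  exact (Nat.Prime.coprime_iff_not_dvd Fact.out).mp hden

theorem pow_dvd_num_of_le {q : ℚ} {k : ℕ} (h : padicNorm p q ≤ (p : ℚ) ^ (-k : ℤ)) :
    ((p ^ k : ℕ) : ℤ) ∣ q.num := by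
  rw [padicNorm.dvd_iff_norm_le, ← Rat.mul_den_eq_num, padicNorm.mul]
  calc padicNorm p q * padicNorm p q.den ≤ (p : ℚ) ^ (-k : ℤ) * 1 :=
        mul_le_mul h (padicNorm.of_nat _) (padicNorm.nonneg _) (by positivity)
    _ = _ := mul_one _

end padicNorm

section

variable {p : ℕ} [Fact p.Prime]

theorem PadicInt.exists_unit_mul_self_of_norm_sub_one_lt {z : ℤ_[p]}
    (h : ‖z - 1‖ < ‖(2 : ℤ_[p])‖ ^ 2) : ∃ u : ℤ_[p]ˣ, ((u * u : ℤ_[p]ˣ) : ℤ_[p]) = z := by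
  set F : Polynomial ℤ_[p] := Polynomial.X ^ 2 - Polynomial.C z
  have hF1 : F.aeval 1 = 1 - z := by simp [F]
  have hF'1 : F.derivative.aeval (1 : ℤ_[p]) = 2 := by simp [F]; norm_num
  obtain ⟨y, hy, hy1, -, -⟩ :=
    hensels_lemma (F := F) (a := 1) (by rwa [hF1, hF'1, norm_sub_rev])
  have hyz : y * y = z := by simpa [F, sub_eq_zero, sq] using hy
  have hy_unit : IsUnit y := by
    by_contra hy'
    rw [PadicInt.not_isUnit_iff] at hy'
    have h1y : ‖1 - y‖ < 1 := by
      rw [norm_sub_rev]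
      exact hy1.trans_le (hF'1 ▸ PadicInt.norm_le_one 2)
    simpa using PadicInt.norm_lt_one_add hy' h1y
  exact ⟨hy_unit.unit, by simp [hyz]⟩

theorem Padic.exists_unit_mul_self_of_norm_sub_one_lt {x : ℚ_[p]}
    (h : ‖x - 1‖ < ‖(2 : ℚ_[p])‖ ^ 2) :
    ∃ u : ℤ_[p]ˣ, (((u * u : ℤ_[p]ˣ) : ℤ_[p]) : ℚ_[p]) = x := by
  have hx : ‖x‖ ≤ 1 :=
    have h2 : ‖(2 : ℚ_[p])‖ ≤ 1 := by
      simpa using IsUltrametricDist.norm_natCast_le_one ℚ_[p] 2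
    calc ‖x‖ = ‖x - 1 + 1‖ := by rw [sub_add_cancel]
      _ ≤ max ‖x - 1‖ 1 := IsUltrametricDist.norm_add_one_le_max_norm_one _
      _ ≤ 1 := max_le (h.le.trans (pow_le_one₀ (norm_nonneg _) h2)) le_rfl
  obtain ⟨u, hu⟩ := PadicInt.exists_unit_mul_self_of_norm_sub_one_lt (z := ⟨x, hx⟩) h
  exact ⟨u, by rw [hu]⟩

variable {a n : ℕ} {A : ℚ}

theorem padicNorm_recurrence_le {x B : ℚ} (han : a ≤ n) (hB : 1 ≤ B)
    (hx : padicNorm p x ≤ B) :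
    padicNorm p (A ^ (n - 1) * x ^ a * (x - 1) ^ (n - a)) ≤ padicNorm p A ^ (n - 1) * B ^ n := by
  simp only [padicNorm.mul, IsAbsoluteValue.abv_pow (padicNorm p)]
  calc padicNorm p A ^ (n - 1) * padicNorm p x ^ a * padicNorm p (x - 1) ^ (n - a)
      ≤ padicNorm p A ^ (n - 1) * B ^ a * B ^ (n - a) := by
        have hA0 := padicNorm.nonneg (p := p) A
        have hx0 := padicNorm.nonneg (p := p) x
        have hx10 := padicNorm.nonneg (p := p) (x - 1)
        gcongr
        exact padicNorm.sub_one_le hB hx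
    _ = padicNorm p A ^ (n - 1) * B ^ n := by rw [mul_assoc, ← pow_add, Nat.add_sub_cancel' han]

theorem padicNorm_pow_mul_pow_padicValNat_le {m : ℕ}
    (hA : (m + n * padicValNat p n : ℤ) ≤ (n - 1 : ℕ) * padicValRat p A) :
    padicNorm p A ^ (n - 1) * ((p : ℚ) ^ padicValNat p n) ^ n ≤ (p : ℚ) ^ (-(m : ℤ)) := by
  have hp : (1 : ℚ) ≤ p := mod_cast (Fact.out : p.Prime).one_le
  calc padicNorm p A ^ (n - 1) * ((p : ℚ) ^ padicValNat p n) ^ n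
      ≤ ((p : ℚ) ^ (-padicValRat p A)) ^ (n - 1) * ((p : ℚ) ^ padicValNat p n) ^ n := by
        gcongr
        · exact padicNorm.nonneg _
        · exact padicNorm.le_zpow_neg_padicValRat A
    _ = (p : ℚ) ^ (-((n - 1 : ℕ) * padicValRat p A) + n * padicValNat p n) := by
        rw [zpow_add₀ (by positivity), ← zpow_natCast, ← zpow_mul, ← pow_mul,
          ← zpow_natCast]
        push_cast
        ring_nf
    _ ≤ (p : ℚ) ^ (-(m : ℤ)) := zpow_le_zpow_right₀ hp (by omega)

theorem padicNorm_seq_sub_one_le {m : ℕ} (han : a ≤ n)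
    (hA : (m + n * padicValNat p n : ℤ) ≤ (n - 1 : ℕ) * padicValRat p A)
    {c : ℕ → ℚ} (hc0 : c 0 = a / n)
    (hcrec : ∀ k, c (k + 1) = A ^ (n - 1) * c k ^ a * (c k - 1) ^ (n - a) + 1) (k : ℕ) :
    padicNorm p (c (k + 1) - 1) ≤ (p : ℚ) ^ (-(m : ℤ)) := by
  set B : ℚ := (p : ℚ) ^ padicValNat p n
  have hp : (1 : ℚ) ≤ p := mod_cast (Fact.out : p.Prime).one_le
  have hB : 1 ≤ B := one_le_pow₀ hp
  have hpm : (p : ℚ) ^ (-(m : ℤ)) ≤ 1 := zpow_le_one_of_nonpos₀ hp (by omega)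
  have step : ∀ k, padicNorm p (c k) ≤ B →
      padicNorm p (c (k + 1) - 1) ≤ (p : ℚ) ^ (-(m : ℤ)) := fun k hk => by
      rw [hcrec, add_sub_cancel_right]
      exact (padicNorm_recurrence_le han hB hk).trans (padicNorm_pow_mul_pow_padicValNat_le hA)
  have bounded : ∀ k, padicNorm p (c k) ≤ B := by
    intro k
    induction k with
    | zero => simpa [hc0] using padicNorm.intCast_div_natCast_le (p := p) a n
    | succ k ih => exact padicNorm.le_of_sub_one_le hB ((step k ih).trans (hpm.trans hB))
  exact step k (bounded k)

end

/-- If `v_2(A) ≥ 3/(n-1) + n·v_2(n)/(n-1)`, then every term `c_k` (`k ≥ 1`) of the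
sequence `c_0 = a/n`, `c_k = A^{n-1} c_{k-1}^a (c_{k-1}-1)^{n-a} + 1` is `2`-integral
and `≡ 1 (mod 8)`; in particular `c_k` is the square of a unit of `ℤ_2`. -/
theorem c_seq_square_in_Z2
    (a n : ℕ) (h0 : 0 < a) (han : a < n)
    (A : ℚ)
    (hv2 : (3 : ℚ) / (n - 1) + (n : ℚ) * (padicValNat 2 n) / (n - 1) ≤ padicValRat 2 A)
    (c : ℕ → ℚ) (hc0 : c 0 = (a : ℚ) / n)
    (hcrec : ∀ k : ℕ, c (k + 1) = A ^ (n - 1) * (c k) ^ a * (c k - 1) ^ (n - a) + 1) :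
    ∀ k : ℕ, 0 < k →
      ¬ 2 ∣ (c k).den ∧ (8 : ℤ) ∣ (c k - 1).num ∧
      ∃ u : ℤ_[2]ˣ, (((u * u : ℤ_[2]ˣ) : ℤ_[2]) : ℚ_[2]) = ((c k : ℚ) : ℚ_[2]) := by
  have hA : (3 + n * padicValNat 2 n : ℤ) ≤ (n - 1 : ℕ) * padicValRat 2 A := by
    have hn : (0 : ℚ) < n - 1 := by
      rw [sub_pos, Nat.one_lt_cast]
      omega
    rw [← add_div, div_le_iff₀ hn] at hv2
    have hA_rat :
        ((3 + n * padicValNat 2 n : ℤ) : ℚ) ≤ (((n - 1 : ℕ) * padicValRat 2 A : ℤ) : ℚ) := by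
      simp only [Int.cast_add, Int.cast_mul, Int.cast_sub, Int.cast_one, Int.cast_natCast,
        Int.cast_ofNat, Nat.cast_sub (by omega : 1 ≤ n), Nat.cast_one]
      linarith
    exact Int.cast_le.mp hA_rat
  intro k hk
  obtain ⟨j, rfl⟩ : ∃ j, k = j + 1 := ⟨k - 1, by omega⟩
  have h8 := padicNorm_seq_sub_one_le (m := 3) han.le hA hc0 hcrec j
  refine ⟨padicNorm.not_dvd_den_of_le_one (padicNorm.le_of_sub_one_le le_rfl (h8.trans ?_)),
    by simpa using padicNorm.pow_dvd_num_of_le h8,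
    Padic.exists_unit_mul_self_of_norm_sub_one_lt ?_⟩
  · norm_num
  · have h2 : ‖(2 : ℚ_[2])‖ = 2⁻¹ := by exact_mod_cast Padic.norm_p (p := 2)
    rw [← Rat.cast_one, ← Rat.cast_sub, Padic.eq_padicNorm, h2]
    have := (Rat.cast_le (K := ℝ)).mpr h8
    norm_num at this ⊢
    linarith
end

section
/- Let a, n, A satisfy the hypotheses of Theorem 3.1 (in particular gcd(a,n)=1, A > 2^{1/(n-1)} (a/n)^{-a/(n-1)} |a/n - 1|^{-(n-a)/(n-1)}, gcd(A^+, n) = 2^{v_2(n)}, gcd(A^-, a(a-n)) = 1, and if n is even then A^- ≢ ±1 mod 8). Set n_2 = n/2^{v_2(n)} and c_k = f^{∘k}((a/n)A)/A where f(X) = X^a(X-A)^{n-a}+A. Then for every k ≥ 1, the denominator of c_k in lowest terms is c_k^- = (A^-)^{n^k - 1} · n_2^{n^k} · (-1)^{(n-a)n^{k-1}}. -/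
/-!
Conjugating `f` by `x ↦ A x` gives `c_k = g^[k] (a/n)` with `g(y) = A^(n-1) y^a (y-1)^(n-a) + 1`.
The denominator of `c_1 - 1 = A^(n-1) (a/n)^a (a/n - 1)^(n-a)` is `(A⁻)^(n-1) n₂^n`: the power
`2^(n v₂(n))` in `n^n` is absorbed by `(A⁺)^(n-1)` because `v₂(A)` is large, and every other factor
of the numerator is coprime to `A⁻ n₂` by the gcd hypotheses. Each further application of `g`
turns the denominator `D` into `(A⁻)^(n-1) D^n` without cancellation, since `A⁺` is coprime to `A⁻`
and to `n₂`. The lower bound on `A` keeps `|c_k - 1| > 2`, so `c_k` has the sign of `c_k - 1`,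
which is `(-1)^(n-a)` for `k = 1` and is multiplied by `(-1)^n` at every step.
-/

open Polynomial

/-- For `q = q⁺/q⁻` in lowest terms with `q⁺ > 0`, `ratDenSigned q = q⁻` is the signed
denominator (the sign of `q` is carried by the denominator). -/
def ratDenSigned (q : ℚ) : ℤ := q.num.sign * q.den

theorem Rat.den_eq_of_mul_eq_of_isCoprime {q : ℚ} {D : ℕ} {N : ℤ} (hD : D ≠ 0)
    (hcop : IsCoprime N D) (h : q * D = N) : q.den = D := by
  have hq : q = (N : ℚ) / ((D : ℤ) : ℚ) := by
    rw [← h, Int.cast_natCast, mul_div_cancel_right₀ _ (Nat.cast_ne_zero.mpr hD)]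
  rw [hq]
  exact_mod_cast Rat.den_div_eq_of_coprime (by omega) (Int.isCoprime_iff_nat_coprime.mp hcop)

theorem Rat.den_mul_pow_mul_sub_one_pow {A q : ℚ} (hcop : IsCoprime A.num q.den)
    (hdvd : A.den ∣ q.den) (m a b : ℕ) :
    (A ^ m * q ^ a * (q - 1) ^ b).den = A.den ^ m * q.den ^ (a + b) := by
  have hq : IsCoprime q.num q.den := q.isCoprime_num_den
  have hq' : IsCoprime (q.num - q.den) q.den := by
    simpa [sub_eq_add_neg] using hq.add_mul_right_left (-1)
  have hdvd' : (A.den : ℤ) ∣ q.den := Int.natCast_dvd_natCast.mpr hdvd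
  apply Rat.den_eq_of_mul_eq_of_isCoprime (N := A.num ^ m * q.num ^ a * (q.num - q.den) ^ b)
  · positivity
  · push_cast
    refine IsCoprime.mul_left (IsCoprime.mul_left ?_ ?_) ?_ <;> refine IsCoprime.mul_right ?_ ?_
    · exact A.isCoprime_num_den.pow
    · exact hcop.pow
    · exact (hq.of_isCoprime_of_dvd_right hdvd').pow
    · exact hq.pow
    · exact (hq'.of_isCoprime_of_dvd_right hdvd').pow
    · exact hq'.pow
  · have hA : A * (A.den : ℚ) = A.num := A.mul_den_eq_num
    have hq : q * (q.den : ℚ) = q.num := q.mul_den_eq_num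
    push_cast
    rw [← hA, ← hq, show q * q.den - q.den = (q - 1) * q.den by ring, mul_pow, mul_pow, mul_pow]
    ring

theorem ratDenSigned_of_pos {q : ℚ} (hq : 0 < q) : ratDenSigned q = q.den := by
  rw [ratDenSigned, Int.sign_eq_one_of_pos (Rat.num_pos.mpr hq), one_mul]

theorem ratDenSigned_eq_neg_one_pow_mul_den {q : ℚ} (hq : q ≠ 0) {s : ℕ} (hs : q < 0 ↔ Odd s) :
    ratDenSigned q = (-1) ^ s * q.den := by
  rcases hq.lt_or_gt with hneg | hpos
  · rw [ratDenSigned, Int.sign_eq_neg_one_of_neg (Rat.num_neg.mpr hneg), (hs.mp hneg).neg_one_pow]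
  · rw [ratDenSigned_of_pos hpos, (Nat.not_odd_iff_even.mp (hs.not.mp hpos.not_gt)).neg_one_pow,
      one_mul]

theorem Nat.coprime_of_prime_sub {a n : ℕ} (ha : 0 < a) (h2a : 2 * a < n) (hp : (n - a).Prime) :
    a.Coprime n := by
  have hdvd : a.gcd n ∣ n - a := Nat.dvd_sub (Nat.gcd_dvd_right a n) (Nat.gcd_dvd_left a n)
  rcases hp.eq_one_or_self_of_dvd _ hdvd with h | h
  · exact h
  · have := Nat.le_of_dvd ha (h ▸ Nat.gcd_dvd_left a n)
    omega

theorem Nat.coprime_div_pow_padicValNat_of_gcd_eq {p x n : ℕ} [hp : Fact p.Prime]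
    (h : x.gcd n = p ^ padicValNat p n) : x.Coprime (n / p ^ padicValNat p n) := by
  rcases eq_or_ne n 0 with rfl | hn
  · simp_all
  have hndiv : ¬ p ∣ n / p ^ padicValNat p n := by
    simpa [Nat.factorization_def n hp.out] using Nat.not_dvd_ordCompl hp.out hn
  have hdvd : x.gcd (n / p ^ padicValNat p n) ∣ p ^ padicValNat p n :=
    (Nat.gcd_dvd_gcd_of_dvd_right x (Nat.div_dvd_of_dvd pow_padicValNat_dvd)).trans (dvd_of_eq h)
  have hcop : (x.gcd (n / p ^ padicValNat p n)).Coprime p :=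
    ((hp.out.coprime_iff_not_dvd).mpr fun h' => hndiv (h'.trans (Nat.gcd_dvd_right _ _))).symm
  exact (hcop.pow_right _).eq_one_of_dvd hdvd

theorem pow_dvd_num_pow_of_div_le_padicValRat {p : ℕ} [Fact p.Prime] {q : ℚ} {e m : ℕ}
    (hm : 0 < m) (h : (e : ℚ) / m ≤ padicValRat p q) : (p : ℤ) ^ e ∣ q.num ^ m := by
  have hv : padicValRat p q ≤ padicValInt p q.num := by
    rw [padicValRat_def]; omega
  have hle : e ≤ padicValInt p q.num * m := by
    rw [div_le_iff₀ (by exact_mod_cast hm)] at h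
    have := mul_le_mul_of_nonneg_right hv (Nat.cast_nonneg (α := ℤ) m)
    zify; linarith [(by exact_mod_cast h : (e : ℤ) ≤ padicValRat p q * m)]
  exact (pow_dvd_pow _ hle).trans (pow_mul (p : ℤ) _ m ▸ pow_dvd_pow_of_dvd (padicValInt_dvd _) m)

theorem neg_iff_sub_one_neg_of_one_lt_abs {K : Type*} [CommRing K] [LinearOrder K]
    [IsStrictOrderedRing K] {y : K} (h : 1 < |y - 1|) : y < 0 ↔ y - 1 < 0 := by
  rcases lt_or_ge (y - 1) 0 with hy | hy
  · rw [abs_of_neg hy] at h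
    exact ⟨fun _ => hy, fun _ => by linarith⟩
  · rw [abs_of_nonneg hy] at h
    exact ⟨fun h' => by linarith, fun h' => by linarith⟩

theorem pow_mul_pow_neg_iff {K : Type*} [CommRing K] [LinearOrder K] [IsStrictOrderedRing K]
    {x y : K} (hx : x < 0) (hy : y < 0) (a b : ℕ) : x ^ a * y ^ b < 0 ↔ Odd (a + b) := by
  have hpos : 0 < (-x) ^ a * (-y) ^ b :=
    mul_pos (pow_pos (neg_pos.mpr hx) a) (pow_pos (neg_pos.mpr hy) b)
  have hxy : (-1) ^ (a + b) * (x ^ a * y ^ b) = (-x) ^ a * (-y) ^ b := by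
    rw [neg_pow x, neg_pow y, pow_add]; ring
  rcases Nat.even_or_odd (a + b) with h | h
  · rw [h.neg_one_pow, one_mul] at hxy
    simp [hxy, hpos.le, Nat.not_odd_iff_even.mpr h]
  · rw [h.neg_one_pow, neg_one_mul] at hxy
    simp [h, neg_pos.mp (hxy ▸ hpos)]

theorem lt_pow_mul_pow_mul_pow_of_rpow_lt {x y z A : ℝ} {a b m : ℕ} (hm : m ≠ 0) (hx : 0 < x)
    (hy : 0 < y) (hz : 0 < z)
    (h : x ^ ((1 : ℝ) / m) * y ^ (-(a : ℝ) / m) * z ^ (-(b : ℝ) / m) < A) :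
    x < A ^ m * y ^ a * z ^ b := by
  set B := x ^ ((1 : ℝ) / m) * y ^ (-(a : ℝ) / m) * z ^ (-(b : ℝ) / m)
  have hB : 0 < B := by positivity
  have hm' : (m : ℝ) ≠ 0 := Nat.cast_ne_zero.mpr hm
  have hBm : B ^ m * y ^ a * z ^ b = x := by
    rw [← Real.rpow_natCast B, Real.mul_rpow (by positivity) (by positivity),
      Real.mul_rpow (by positivity) (by positivity), ← Real.rpow_mul hx.le, ← Real.rpow_mul hy.le,
      ← Real.rpow_mul hz.le, div_mul_cancel₀ _ hm', div_mul_cancel₀ _ hm', div_mul_cancel₀ _ hm',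
      Real.rpow_one, Real.rpow_neg hy.le, Real.rpow_neg hz.le, Real.rpow_natCast, Real.rpow_natCast]
    field_simp
  rw [← hBm]
  gcongr

/-- `y ↦ f(A y) / A` for `f(X) = X^a (X - A)^(n-a) + A`,
so that `c_k = (rescaledMap A a n)^[k] (a/n)`. -/
def rescaledMap (A : ℚ) (a n : ℕ) (y : ℚ) : ℚ := A ^ (n - 1) * y ^ a * (y - 1) ^ (n - a) + 1

theorem rescaledMap_sub_one (A : ℚ) (a n : ℕ) (y : ℚ) :
    rescaledMap A a n y - 1 = A ^ (n - 1) * y ^ a * (y - 1) ^ (n - a) :=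
  add_sub_cancel_right _ _

theorem rescaledMap_den_eq (A : ℚ) (a n : ℕ) (y : ℚ) :
    (rescaledMap A a n y).den = (A ^ (n - 1) * y ^ a * (y - 1) ^ (n - a)).den := by
  simpa [rescaledMap_sub_one] using (Rat.sub_intCast_den (rescaledMap A a n y) 1).symm

theorem semiconj_mul_rescaledMap (A : ℚ) {a n : ℕ} (han : a ≤ n) (hn : 0 < n) :
    Function.Semiconj (A * ·) (rescaledMap A a n) (fun x => x ^ a * (x - A) ^ (n - a) + A) := by
  intro y
  have hpow : A ^ a * A ^ (n - a) = A * A ^ (n - 1) := by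
    rw [← pow_add, ← pow_succ', Nat.add_sub_cancel' han, Nat.sub_add_cancel hn]
  simp only [rescaledMap, mul_add, mul_one, ← mul_sub_one, mul_pow]
  linear_combination -(y ^ a * (y - 1) ^ (n - a)) * hpow

theorem iterate_div_eq_rescaledMap_iterate {A : ℚ} (hA : A ≠ 0) {a n : ℕ} (han : a ≤ n)
    (hn : 0 < n) (k : ℕ) (y : ℚ) :
    (fun x : ℚ => x ^ a * (x - A) ^ (n - a) + A)^[k] (A * y) / A = (rescaledMap A a n)^[k] y := by
  rw [← (semiconj_mul_rescaledMap A han hn).iterate_right k y, mul_div_cancel_left₀ _ hA]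

theorem two_lt_abs_rescaledMap_sub_one {A : ℚ} (hA : 1 ≤ A) {a n : ℕ} (han : a < n) {y : ℚ}
    (hy : 2 < |y - 1|) : 2 < |rescaledMap A a n y - 1| := by
  have hy' : 1 ≤ |y| := by
    have := abs_sub_abs_le_abs_sub (y - 1) y
    rw [sub_sub_cancel_left, abs_neg, abs_one] at this
    linarith
  rw [rescaledMap_sub_one, abs_mul, abs_mul, abs_pow, abs_pow, abs_pow, abs_of_pos (by linarith)]
  calc (2 : ℚ) < |y - 1| := hy
    _ ≤ |y - 1| ^ (n - a) := le_self_pow₀ (by linarith) (by omega)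
    _ ≤ A ^ (n - 1) * |y| ^ a * |y - 1| ^ (n - a) :=
      le_mul_of_one_le_left (by positivity)
        (one_le_mul_of_one_le_of_one_le (one_le_pow₀ hA) (one_le_pow₀ hy'))

theorem two_lt_abs_rescaledMap_iterate_sub_one {A : ℚ} (hA : 1 ≤ A) {a n : ℕ} (han : a < n)
    {y : ℚ} (hy : 2 < |y - 1|) : ∀ j, 2 < |(rescaledMap A a n)^[j] y - 1|
  | 0 => hy
  | j + 1 => by
    rw [Function.iterate_succ_apply']
    exact two_lt_abs_rescaledMap_sub_one hA han (two_lt_abs_rescaledMap_iterate_sub_one hA han hy j)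

theorem rescaledMap_sub_one_neg_iff {A : ℚ} (hA : 0 < A) {a n : ℕ} (han : a ≤ n) {y : ℚ}
    (hy : 1 < |y - 1|) : rescaledMap A a n y - 1 < 0 ↔ y - 1 < 0 ∧ Odd n := by
  rw [rescaledMap_sub_one, mul_assoc, Rat.mul_neg_iff_of_pos_left (pow_pos hA _)]
  rcases lt_or_ge (y - 1) 0 with hy1 | hy1
  · have hy0 : y < 0 := (neg_iff_sub_one_neg_of_one_lt_abs hy).mpr hy1
    rw [pow_mul_pow_neg_iff hy0 hy1, Nat.add_sub_cancel' han]
    exact (and_iff_right hy1).symm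
  · have hy0 : 0 ≤ y := not_lt.mp ((neg_iff_sub_one_neg_of_one_lt_abs hy).not.mpr hy1.not_gt)
    simp only [hy1.not_gt, false_and, iff_false, not_lt]
    positivity

theorem rescaledMap_iterate_sub_one_neg_iff {A : ℚ} (hA : 1 ≤ A) {a n : ℕ} (han : a < n)
    {y : ℚ} (hy : 2 < |y - 1|) (j : ℕ) :
    (rescaledMap A a n)^[j] y - 1 < 0 ↔ y - 1 < 0 ∧ Odd (n ^ j) := by
  induction j with
  | zero => simp
  | succ j ih =>
    have hj := two_lt_abs_rescaledMap_iterate_sub_one hA han hy j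
    rw [Function.iterate_succ_apply', rescaledMap_sub_one_neg_iff (by linarith) han.le
      (by linarith), ih, pow_succ, Nat.odd_mul, and_assoc]

theorem rescaledMap_iterate_ne_zero {A : ℚ} (hA : 1 ≤ A) {a n : ℕ} (han : a < n) {y : ℚ}
    (hy : 2 < |y - 1|) (j : ℕ) : (rescaledMap A a n)^[j] y ≠ 0 := fun h => by
  have := two_lt_abs_rescaledMap_iterate_sub_one hA han hy j
  norm_num [h] at this

theorem rescaledMap_iterate_neg_iff {A : ℚ} (hA : 1 ≤ A) {a n : ℕ} (han : a < n) {y : ℚ}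
    (hy : 2 < |y - 1|) (j : ℕ) : (rescaledMap A a n)^[j] y < 0 ↔ y - 1 < 0 ∧ Odd (n ^ j) := by
  have := two_lt_abs_rescaledMap_iterate_sub_one hA han hy j
  rw [neg_iff_sub_one_neg_of_one_lt_abs (by linarith),
    rescaledMap_iterate_sub_one_neg_iff hA han hy]

theorem rescaledMap_den {A : ℚ} {y : ℚ} (hAy : IsCoprime A.num y.den) (hdvd : A.den ∣ y.den)
    {a n : ℕ} (han : a ≤ n) : (rescaledMap A a n y).den = A.den ^ (n - 1) * y.den ^ n := by
  rw [rescaledMap_den_eq, Rat.den_mul_pow_mul_sub_one_pow hAy hdvd, Nat.add_sub_cancel' han]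

theorem rescaledMap_iterate_den {A : ℚ} {a n e : ℕ} (hn : 2 ≤ n) (han : a ≤ n)
    (hAe : IsCoprime A.num e) {y : ℚ} (hy : y.den = A.den ^ (n - 1) * e ^ n) (j : ℕ) :
    ((rescaledMap A a n)^[j] y).den = A.den ^ (n ^ (j + 1) - 1) * e ^ n ^ (j + 1) := by
  induction j with
  | zero => rwa [zero_add, pow_one]
  | succ j ih =>
    have hN : n ≤ n ^ (j + 1) := Nat.le_self_pow (Nat.succ_ne_zero j) n
    have hcop : IsCoprime A.num ((rescaledMap A a n)^[j] y).den := by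
      rw [ih]; push_cast
      exact A.isCoprime_num_den.pow_right.mul_right hAe.pow_right
    have hdvd : A.den ∣ ((rescaledMap A a n)^[j] y).den := by
      rw [ih]; exact dvd_mul_of_dvd_left (dvd_pow_self _ (by omega)) _
    rw [Function.iterate_succ_apply', rescaledMap_den hcop hdvd han, ih, mul_pow, ← pow_mul,
      ← pow_mul, ← pow_succ, ← mul_assoc, ← pow_add]
    congr 2
    rw [Nat.sub_mul, one_mul, ← pow_succ]
    have : n ≤ n ^ (j + 1 + 1) := Nat.le_self_pow (by omega) n
    omega

theorem two_lt_abs_rescaledMap_div_sub_one {A : ℚ} {a n : ℕ} (h0 : 0 < a) (han : a < n)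
    (hA : (2 : ℝ) ^ ((1 : ℝ) / (n - 1)) * ((a : ℝ) / n) ^ (-(a : ℝ) / (n - 1)) *
        |(a : ℝ) / n - 1| ^ (-((n : ℝ) - a) / (n - 1)) < A) :
    2 < |rescaledMap A a n (a / n) - 1| := by
  rw [← Nat.cast_pred (by omega), ← Nat.cast_sub han.le] at hA
  have hα : (0 : ℚ) < a / n := div_pos (by exact_mod_cast h0) (by exact_mod_cast h0.trans han)
  have hβ : (0 : ℚ) < |(a : ℚ) / n - 1| := by
    rw [abs_pos, sub_ne_zero, Ne, div_eq_one_iff_eq (by exact_mod_cast (h0.trans han).ne')]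
    exact_mod_cast han.ne
  have hA0 : (0 : ℝ) < A := lt_of_le_of_lt (by positivity) hA
  have key := lt_pow_mul_pow_mul_pow_of_rpow_lt (m := n - 1) (by omega) two_pos
    (by exact_mod_cast hα : (0 : ℝ) < ((a / n : ℚ) : ℝ))
    (by exact_mod_cast hβ : (0 : ℝ) < ((|a / n - 1| : ℚ) : ℝ)) (by push_cast; exact hA)
  rw [rescaledMap_sub_one, abs_mul, abs_mul, abs_pow, abs_pow, abs_pow,
    abs_of_pos (by exact_mod_cast hA0), abs_of_pos hα]
  exact_mod_cast key

theorem rescaledMap_div_sub_one_neg_iff {A : ℚ} (hA : 0 < A) {a n : ℕ} (h0 : 0 < a) (han : a < n) :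
    rescaledMap A a n (a / n) - 1 < 0 ↔ Odd (n - a) := by
  have hα : (0 : ℚ) < a / n := div_pos (by exact_mod_cast h0) (by exact_mod_cast h0.trans han)
  have hpos : 0 < A ^ (n - 1) * ((a : ℚ) / n) ^ a := by positivity
  have hneg : (a : ℚ) / n - 1 < 0 := by
    rw [sub_neg, div_lt_one (by exact_mod_cast h0.trans han)]; exact_mod_cast han
  rw [rescaledMap_sub_one, Rat.mul_neg_iff_of_pos_left hpos]
  rcases Nat.even_or_odd (n - a) with h | h
  · simp [(h.pow_pos hneg.ne).le, Nat.not_odd_iff_even.mpr h]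
  · simp [h.pow_neg hneg, h]

theorem rescaledMap_div_sub_one_mul_eq {A : ℚ} {a n t e : ℕ} {P₁ : ℤ} (hn : n = t * e)
    (hn0 : n ≠ 0) (han : a ≤ n) (hP₁ : A.num ^ (n - 1) = t ^ n * P₁) :
    A ^ (n - 1) * ((a : ℚ) / n) ^ a * ((a : ℚ) / n - 1) ^ (n - a)
        * ((A.den ^ (n - 1) * e ^ n : ℕ) : ℚ) = ((P₁ * a ^ a * (a - n) ^ (n - a) : ℤ) : ℚ) := by
  have hn' : (n : ℚ) ≠ 0 := Nat.cast_ne_zero.mpr hn0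
  have hA : A * A.den = A.num := A.mul_den_eq_num
  have hP : (A.num : ℚ) ^ (n - 1) = t ^ n * P₁ := by exact_mod_cast hP₁
  have hnn : (t * e : ℚ) ^ n = n ^ a * n ^ (n - a) := by
    rw [← pow_add, Nat.add_sub_cancel' han, ← Nat.cast_mul, ← hn]
  apply mul_left_cancel₀ (pow_ne_zero n (by rintro h; simp_all) : (t : ℚ) ^ n ≠ 0)
  calc (t : ℚ) ^ n * (A ^ (n - 1) * ((a : ℚ) / n) ^ a * ((a : ℚ) / n - 1) ^ (n - a)
          * ((A.den ^ (n - 1) * e ^ n : ℕ) : ℚ))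
      = (A * A.den) ^ (n - 1) * (((a : ℚ) / n * n) ^ a * (((a : ℚ) / n - 1) * n) ^ (n - a)) := by
        rw [mul_pow _ (n : ℚ), mul_pow _ (n : ℚ), ← mul_mul_mul_comm, ← hnn]
        push_cast
        ring
    _ = t ^ n * ((P₁ * a ^ a * (a - n) ^ (n - a) : ℤ) : ℚ) := by
        rw [hA, hP, div_mul_cancel₀ _ hn', sub_one_mul, div_mul_cancel₀ _ hn']
        push_cast
        ring

theorem rescaledMap_div_den {A : ℚ} {a n t e : ℕ} (hn : n = t * e) (hn0 : n ≠ 0) (han : a ≤ n)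
    (ht : (t : ℤ) ^ n ∣ A.num ^ (n - 1)) (hAe : IsCoprime A.num e) (hae : IsCoprime (a : ℤ) e)
    (had : IsCoprime ((a : ℤ) * (a - n)) A.den) :
    (rescaledMap A a n (a / n)).den = A.den ^ (n - 1) * e ^ n := by
  obtain ⟨P₁, hP₁⟩ := ht
  have hP₁d : P₁ ∣ A.num ^ (n - 1) := Dvd.intro_left _ hP₁.symm
  have hane : IsCoprime ((a : ℤ) - n) e := by
    rw [hn, Nat.cast_mul]; exact IsCoprime.sub_mul_right_left_iff.mpr hae
  have he : e ≠ 0 := by rintro rfl; omega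
  rw [rescaledMap_den_eq]
  refine Rat.den_eq_of_mul_eq_of_isCoprime (N := P₁ * a ^ a * (a - n) ^ (n - a))
    (mul_ne_zero (pow_ne_zero _ A.den_nz) (pow_ne_zero _ he)) ?_
    (rescaledMap_div_sub_one_mul_eq hn hn0 han hP₁)
  push_cast
  refine IsCoprime.mul_left (IsCoprime.mul_left ?_ ?_) ?_ <;> refine IsCoprime.mul_right ?_ ?_
  · exact A.isCoprime_num_den.pow_left.of_isCoprime_of_dvd_left hP₁d |>.pow_right
  · exact hAe.pow_left.of_isCoprime_of_dvd_left hP₁d |>.pow_right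
  · exact had.of_mul_left_left.pow
  · exact hae.pow
  · exact had.of_mul_left_right.pow
  · exact hane.pow

theorem denominator_of_c_k_general
    (a n : ℕ) (h0 : 0 < a) (han : a < n)
    (ha1 : n ≤ 6 → a = 1) (ha2 : n % 8 = 7 → a = 1)
    (ha3 : 6 < n → n % 8 ≠ 7 → Nat.Prime (n - a) ∧ 2 * a < n)
    (A : ℚ)
    (hA3 : (2 : ℝ) ^ ((1 : ℝ) / (n - 1)) * ((a : ℝ) / n) ^ (-(a : ℝ) / (n - 1)) *
        |(a : ℝ) / n - 1| ^ (-((n : ℝ) - a) / (n - 1)) < (A : ℝ) ∧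
        (1 : ℝ) < (2 : ℝ) ^ ((1 : ℝ) / (n - 1)) * ((a : ℝ) / n) ^ (-(a : ℝ) / (n - 1)) *
        |(a : ℝ) / n - 1| ^ (-((n : ℝ) - a) / (n - 1)))
    (hA4 : (3 : ℚ) / (n - 1) + (n : ℚ) * (padicValNat 2 n) / (n - 1) ≤ padicValRat 2 A)
    (hA5 : Nat.gcd A.num.natAbs n = 2 ^ padicValNat 2 n)
    (hA6 : Int.gcd (ratDenSigned A) ((a : ℤ) * ((a : ℤ) - n)) = 1) :
    ∀ k : ℕ, 0 < k →
      ratDenSigned ((fun x : ℚ => x ^ a * (x - A) ^ (n - a) + A)^[k] ((a : ℚ) * A / n) / A)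
        = (ratDenSigned A) ^ (n ^ k - 1) * ((n / 2 ^ padicValNat 2 n : ℕ) : ℤ) ^ (n ^ k)
          * (-1) ^ ((n - a) * n ^ (k - 1)) := by
  intro k hk
  obtain ⟨j, rfl⟩ := Nat.exists_eq_add_one_of_ne_zero hk.ne'
  have hA1 : 1 < A := by exact_mod_cast hA3.2.trans hA3.1
  have hA0 : 0 < A := one_pos.trans hA1
  have hcop : a.Coprime n := by
    obtain rfl | ha := eq_or_ne a 1
    · exact Nat.coprime_one_left n
    obtain ⟨hp, h2a⟩ := ha3 (by contrapose! ha; exact ha1 ha) (mt ha2 ha)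
    exact Nat.coprime_of_prime_sub h0 h2a hp
  set n₂ := n / 2 ^ padicValNat 2 n
  have h2adic : ((2 ^ padicValNat 2 n : ℕ) : ℤ) ^ n ∣ A.num ^ (n - 1) := by
    rw [Nat.cast_pow, ← pow_mul, mul_comm]
    apply pow_dvd_num_pow_of_div_le_padicValRat (by omega)
    have hn : (2 : ℚ) ≤ n := by exact_mod_cast (by omega : 2 ≤ n)
    have h3 : (0 : ℚ) ≤ 3 / (n - 1) := div_nonneg (by norm_num) (by linarith)
    push_cast [Nat.cast_pred (by omega : 0 < n)]
    linarith
  have hAn₂ : IsCoprime A.num n₂ :=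
    Int.isCoprime_iff_nat_coprime.mpr (Nat.coprime_div_pow_padicValNat_of_gcd_eq hA5)
  have han₂ : IsCoprime (a : ℤ) n₂ :=
    Nat.isCoprime_iff_coprime.mpr (hcop.coprime_dvd_right (Nat.div_dvd_of_dvd pow_padicValNat_dvd))
  have had : IsCoprime ((a : ℤ) * (a - n)) A.den := by
    rw [ratDenSigned_of_pos hA0] at hA6
    exact (Int.isCoprime_iff_gcd_eq_one.mpr hA6).symm
  set y := rescaledMap A a n (a / n)
  have hy2 : 2 < |y - 1| := two_lt_abs_rescaledMap_div_sub_one h0 han hA3.1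
  have hyden : y.den = A.den ^ (n - 1) * n₂ ^ n := rescaledMap_div_den
    (Nat.mul_div_cancel' pow_padicValNat_dvd).symm (by omega) han.le h2adic hAn₂ han₂ had
  have hsign : (rescaledMap A a n)^[j] y < 0 ↔ Odd ((n - a) * n ^ j) := by
    rw [rescaledMap_iterate_neg_iff hA1.le han hy2, rescaledMap_div_sub_one_neg_iff hA0 h0 han,
      Nat.odd_mul]
  rw [show (a : ℚ) * A / n = A * (a / n) by ring,
    iterate_div_eq_rescaledMap_iterate hA0.ne' han.le (by omega), Function.iterate_succ_apply,
    ratDenSigned_of_pos hA0,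
    ratDenSigned_eq_neg_one_pow_mul_den (rescaledMap_iterate_ne_zero hA1.le han hy2 j) hsign,
    rescaledMap_iterate_den (by omega) han.le hAn₂ hyden, Nat.add_sub_cancel]
  push_cast
  ring

/-- Equation (3.3) in Lemma 3.5: under the hypotheses of Theorem 3.1, writing
`c_k = f^{∘k}((a/n)A)/A` with `f(X) = X^a(X-A)^{n-a} + A` and `n₂ = n/2^{v₂(n)}`,
the signed denominator of `c_k` is `(A⁻)^{n^k - 1} · n₂^{n^k} · (-1)^{(n-a)n^{k-1}}`. -/
theorem denominator_of_c_k
    (a n : ℕ) (h0 : 0 < a) (han : a < n)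
    (ha1 : n ≤ 6 → a = 1) (ha2 : n % 8 = 7 → a = 1)
    (ha3 : 6 < n → n % 8 ≠ 7 → Nat.Prime (n - a) ∧ 2 * a < n)
    (A : ℚ)
    (hA2 : ∃ p₀ : ℕ, p₀.Prime ∧ ¬ p₀ ∣ n ∧ padicValRat p₀ A = 1)
    (hA3 : (2 : ℝ) ^ ((1 : ℝ) / (n - 1)) * ((a : ℝ) / n) ^ (-(a : ℝ) / (n - 1)) *
        |(a : ℝ) / n - 1| ^ (-((n : ℝ) - a) / (n - 1)) < (A : ℝ) ∧
        (1 : ℝ) < (2 : ℝ) ^ ((1 : ℝ) / (n - 1)) * ((a : ℝ) / n) ^ (-(a : ℝ) / (n - 1)) *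
        |(a : ℝ) / n - 1| ^ (-((n : ℝ) - a) / (n - 1)))
    (hA4 : (3 : ℚ) / (n - 1) + (n : ℚ) * (padicValNat 2 n) / (n - 1) ≤ padicValRat 2 A)
    (hA5 : Nat.gcd A.num.natAbs n = 2 ^ padicValNat 2 n)
    (hA6 : Int.gcd (ratDenSigned A) ((a : ℤ) * ((a : ℤ) - n)) = 1)
    (hA699 : ∃ p' : ℕ, p'.Prime ∧ n < p' ∧ padicValRat p' A = -1)
    (hA7 : Even n → (ratDenSigned A) % 8 ≠ 1 ∧ (ratDenSigned A) % 8 ≠ 7) :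
    ∀ k : ℕ, 0 < k →
      ratDenSigned ((fun x : ℚ => x ^ a * (x - A) ^ (n - a) + A)^[k] ((a : ℚ) * A / n) / A)
        = (ratDenSigned A) ^ (n ^ k - 1) * ((n / 2 ^ padicValNat 2 n : ℕ) : ℤ) ^ (n ^ k)
          * (-1) ^ ((n - a) * n ^ (k - 1)) :=
  denominator_of_c_k_general a n h0 han ha1 ha2 ha3 A hA3 hA4 hA5 hA6
end

section
/- For the polynomial g(X, t) = X^n - tX^{n-1} - t over ℂ(t), the discriminant with respect to X equals (up to sign and a power of the leading data) n^n (-t)^{n-1} ((1/n)((n-1)t/n)^{n-1} + 1); in particular the branch points of the associated cover of the t-line are t = 0 and the n - 1 values t = M e^{(2k+1)πi/(n-1)} (k = 0, …, n-2) for a positive real constant M independent of k. -/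
/-!
Write `n = m + 2` and `g = X^(m+2) - t X^(m+1) - t`. Over an algebraically closed field `g` fails
to be separable iff it shares a root with `g' = X^m ((m+2) X - (m+1) t)`, i.e. iff `g` vanishes
at `0` or at `c = (m+1) t / (m+2)`. Since `c - t = -t / (m+2)`, the critical value is
`g(c) = -t (c^(m+1) / (m+2) + 1)`, and `g(0) = -t`. The factor `c^(m+1) / (m+2) + 1` vanishes iff
`t^(m+1) = -M^(m+1)` with `M^(m+1) = (m+2)^(m+2) / (m+1)^(m+1)`, whose solutions are `M` times
the `(m+1)`-th roots of `-1`.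
-/

open Polynomial

theorem Polynomial.not_separable_iff_exists_isRoot_derivative {K : Type*} [Field K]
    [IsAlgClosed K] {p : K[X]} : ¬p.Separable ↔ ∃ z, p.IsRoot z ∧ p.derivative.IsRoot z := by
  simp [Separable, isCoprime_iff_aeval_ne_zero_of_isAlgClosed K K, coe_aeval_eq_eval, IsRoot]

section Trinomial

variable {K : Type*} [Field K] (m : ℕ) (t : K)

lemma derivative_trinomial :
    derivative (X ^ (m + 2) - C t * X ^ (m + 1) - C t : K[X]) =
      X ^ m * (C ((m : K) + 2) * X - C (((m : K) + 1) * t)) := by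
  simp only [derivative_sub, derivative_X_pow_succ, derivative_C_mul_X_pow, derivative_C,
    Nat.add_sub_cancel, map_mul, map_add, map_natCast, map_ofNat, map_one]
  push_cast
  ring

variable [CharZero K]

lemma eval_trinomial_critical :
    eval (((m : K) + 1) * t / (m + 2)) (X ^ (m + 2) - C t * X ^ (m + 1) - C t : K[X]) =
      -t * (1 / (m + 2) * (((m : K) + 1) * t / (m + 2)) ^ (m + 1) + 1) := by
  have hm : (m : K) + 2 ≠ 0 := by exact_mod_cast (m + 1).succ_ne_zero
  have hct : ((m : K) + 1) * t / (m + 2) - t = -t / (m + 2) := by field_simp; ring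
  simp only [eval_sub, eval_pow, eval_X, eval_mul, eval_C]
  generalize ((m : K) + 1) * t / (m + 2) = c at hct ⊢
  linear_combination c ^ (m + 1) * hct

lemma not_separable_trinomial_iff [IsAlgClosed K] :
    ¬(X ^ (m + 2) - C t * X ^ (m + 1) - C t : K[X]).Separable ↔
      t = 0 ∨ 1 / (m + 2) * (((m : K) + 1) * t / (m + 2)) ^ (m + 1) + 1 = 0 := by
  have hm : (m : K) + 2 ≠ 0 := by exact_mod_cast (m + 1).succ_ne_zero
  have hcrit (z : K) : (m + 2) * z - (m + 1) * t = 0 ↔ z = (m + 1) * t / (m + 2) := by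
    rw [eq_div_iff hm, sub_eq_zero, mul_comm]
  rw [not_separable_iff_exists_isRoot_derivative, derivative_trinomial]
  constructor
  · rintro ⟨z, hz, hz'⟩
    simp only [IsRoot, eval_mul, eval_pow, eval_X, eval_sub, eval_C, mul_eq_zero,
      pow_eq_zero_iff', hcrit] at hz'
    rcases hz' with ⟨rfl, -⟩ | rfl
    · exact .inl (by simpa using hz)
    · rwa [IsRoot, eval_trinomial_critical, mul_eq_zero, neg_eq_zero] at hz
  · intro h
    refine ⟨(m + 1) * t / (m + 2), ?_, by simp [hcrit]⟩
    rwa [IsRoot, eval_trinomial_critical, mul_eq_zero, neg_eq_zero]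

lemma critical_value_factor_eq_zero_iff :
    1 / (m + 2) * (((m : K) + 1) * t / (m + 2)) ^ (m + 1) + 1 = 0 ↔
      t ^ (m + 1) = -(((m : K) + 2) ^ (m + 2) / ((m : K) + 1) ^ (m + 1)) := by
  have h1 : (m : K) + 1 ≠ 0 := by exact_mod_cast m.succ_ne_zero
  have h2 : (m : K) + 2 ≠ 0 := by exact_mod_cast (m + 1).succ_ne_zero
  have hfactor : 1 / (m + 2) * (((m : K) + 1) * t / (m + 2)) ^ (m + 1) + 1 =
      ((m : K) + 1) ^ (m + 1) / ((m : K) + 2) ^ (m + 2) *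
        (t ^ (m + 1) + ((m : K) + 2) ^ (m + 2) / ((m : K) + 1) ^ (m + 1)) := by
    rw [div_pow, mul_pow]
    field_simp
    ring
  rw [hfactor, mul_eq_zero, or_iff_right (by positivity), eq_neg_iff_add_eq_zero]

end Trinomial

namespace Complex

open Real

lemma exp_odd_mul_pi_mul_I_div (k n : ℕ) :
    exp ((2 * k + 1) * π * I / n) = exp (π * I / n) * exp (2 * π * I / n) ^ k := by
  rw [← exp_nat_mul, ← exp_add]
  congr 1
  ring

lemma exp_pi_mul_I_div_pow {n : ℕ} (hn : n ≠ 0) : exp (π * I / n) ^ n = -1 := by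
  rw [← exp_nat_mul, mul_div_cancel₀ _ (Nat.cast_ne_zero.mpr hn), exp_pi_mul_I]

theorem pow_eq_neg_pow_iff {n : ℕ} (hn : n ≠ 0) {R : ℂ} (hR : R ≠ 0) (z : ℂ) :
    z ^ n = -R ^ n ↔ ∃ k < n, z = R * exp ((2 * k + 1) * π * I / n) := by
  have : NeZero n := ⟨hn⟩
  have hζ := isPrimitiveRoot_exp n hn
  simp_rw [exp_odd_mul_pi_mul_I_div, ← mul_assoc]
  set w := R * exp (π * I / n)
  have hw : w ^ n = -R ^ n := by rw [mul_pow, exp_pi_mul_I_div_pow hn, mul_neg_one]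
  have hw0 : w ≠ 0 := mul_ne_zero hR (exp_ne_zero _)
  constructor
  · intro h
    have hroot : (z / w) ^ n = 1 := by
      rw [div_pow, h, hw, div_self (neg_ne_zero.mpr (pow_ne_zero n hR))]
    obtain ⟨k, hk, hzk⟩ := hζ.eq_pow_of_pow_eq_one hroot
    exact ⟨k, hk, by rw [hzk, mul_div_cancel₀ z hw0]⟩
  · rintro ⟨k, -, rfl⟩
    rw [mul_pow, hw, ← pow_mul, mul_comm k, pow_mul, hζ.pow_eq_one, one_pow, mul_one]

end Complex

/-- The discriminant computation in Lemma 4.1: for `g(X,t) = X^n - tX^{n-1} - t`, a value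
`t₀ ∈ ℂ` is a branch point (i.e. `g(X,t₀)` has a repeated root, equivalently is not
separable) exactly when `n^n(-t₀)^{n-1}((1/n)((n-1)t₀/n)^{n-1} + 1) = 0`, and the branch
points are `t₀ = 0` together with the `n-1` values `M·e^{(2k+1)πi/(n-1)}`,
`k = 0, …, n-2`, for some positive real `M` independent of `k`. -/
theorem branch_points_of_trinomial_family (n : ℕ) (hn : 2 ≤ n) :
    ∃ M : ℝ, 0 < M ∧ ∀ t₀ : ℂ,
      ((¬ (X ^ n - C t₀ * X ^ (n - 1) - C t₀ : Polynomial ℂ).Separable) ↔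
        (n : ℂ) ^ n * (-t₀) ^ (n - 1) *
          ((1 / (n : ℂ)) * (((n : ℂ) - 1) * t₀ / n) ^ (n - 1) + 1) = 0) ∧
      ((¬ (X ^ n - C t₀ * X ^ (n - 1) - C t₀ : Polynomial ℂ).Separable) ↔
        (t₀ = 0 ∨ ∃ k : ℕ, k < n - 1 ∧
          t₀ = (M : ℂ) * Complex.exp ((2 * k + 1) * Real.pi * Complex.I / ((n : ℂ) - 1)))) := by
  obtain ⟨m, rfl⟩ := Nat.exists_eq_add_of_le' hn
  obtain ⟨M, hM, hMpow⟩ : ∃ M : ℝ, 0 < M ∧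
      M ^ (m + 1) = ((m : ℝ) + 2) ^ (m + 2) / ((m : ℝ) + 1) ^ (m + 1) :=
    ⟨_, by positivity, Real.rpow_inv_natCast_pow (by positivity) m.succ_ne_zero⟩
  have hMpowC : (M : ℂ) ^ (m + 1) = ((m : ℂ) + 2) ^ (m + 2) / ((m : ℂ) + 1) ^ (m + 1) := by
    rw [← Complex.ofReal_pow, hMpow]
    push_cast
    rfl
  have hm2 : (m : ℂ) + 2 ≠ 0 := by exact_mod_cast (m + 1).succ_ne_zero
  have hsub : m + 2 - 1 = m + 1 := rfl
  have hsubC : ((m + 2 : ℕ) : ℂ) - 1 = ((m + 1 : ℕ) : ℂ) := by push_cast; ring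
  refine ⟨M, hM, fun t => ⟨?_, ?_⟩⟩
  · rw [hsub, hsubC, not_separable_trinomial_iff]
    push_cast
    simp [hm2]
  · rw [hsub, hsubC, not_separable_trinomial_iff, critical_value_factor_eq_zero_iff, ← hMpowC,
      Complex.pow_eq_neg_pow_iff m.succ_ne_zero (by exact_mod_cast hM.ne')]
end
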